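/- arXiv:0810.5565 — 2 statements merged into one kernel-verified Lean document; each statement's English description precedes it below -/
import Mathlib

section
/- Let H ⊆ ℝ^{[0,1]} be uniformly bounded and satisfy lim_n sup_{h₁,h₂∈H} |λ_n((h₁−h₂)²) − λ((h₁−h₂)²)| = 0, let G be a class of functions on U with envelope G₀ ∈ L²(ν) normalized so ν(G₀²) = 1, and let d(h₁g₁, h₂g₂) = ‖h₁−h₂‖_{L²(λ)} + ‖g₁−g₂‖_{L²(ν)} on F = {hg : h∈H, g∈G}. Define d_{λ_n⊗ν}(f₁,f₂) = ‖f₁−f₂‖_{L²(λ_n⊗ν)}. Then lim_{α↓0} limsup_{n→∞} sup{d_{λ_n⊗ν}(f₁,f₂) : f₁,f₂ ∈ F, d(f₁,f₂) ≤ α} = 0. -/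
open scoped BigOperators
open MeasureTheory

/-- `λ_n(f) = (1/n) ∑_{i=1}^n f(i/n)`, the discrete uniform measure on `[0,1]`. -/
noncomputable def lamn (n : ℕ) (f : ℝ → ℝ) : ℝ :=
  (1 / (n:ℝ)) * ∑ i ∈ Finset.Icc 1 n, f ((i:ℝ) / n)

/-- `λ(f) = ∫₀¹ f`, integration against Lebesgue measure on `[0,1]`. -/
noncomputable def lam (f : ℝ → ℝ) : ℝ := ∫ x in (0:ℝ)..1, f x

/-- The `L²(λ_n ⊗ ν)` pseudo-distance between the products `h₁g₁` and `h₂g₂`. -/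
noncomputable def dProd {U : Type*} [MeasurableSpace U] (ν : Measure U) (n : ℕ)
    (h₁ g₁h : ℝ → ℝ) (g₁ g₂ : U → ℝ) : ℝ :=
  Real.sqrt ((1 / (n:ℝ)) * ∑ i ∈ Finset.Icc 1 n,
    ∫ x, (h₁ ((i:ℝ) / n) * g₁ x - g₁h ((i:ℝ) / n) * g₂ x) ^ 2 ∂ν)

/-!
Write `a g₁ - b g₂ = a (g₁ - g₂) + (a - b) g₂`. With `|h₁| ≤ M` and `ν(g₂²) ≤ ν(G₀²) = 1` this gives,
for every `t ∈ [0,1]`,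
`ν((h₁(t) g₁ - h₂(t) g₂)²) ≤ 2M² ν((g₁ - g₂)²) + 2 (h₁(t) - h₂(t))²`.
Averaging over `t = i/n`, a pair with `d(h₁g₁, h₂g₂) ≤ α` satisfies
`d_{λ_n⊗ν}² ≤ 2M²α² + 2 λ_n((h₁ - h₂)²) ≤ 2(M² + 1)α² + 2εₙ`, where `εₙ` is the uniform discrepancy
between `λ_n` and `λ` on `H`, which tends to `0`. Hence the `limsup` is at most `√(2(M² + 1)) α`.
-/

open Filter Set Topology

section DiscreteUniform

variable {n : ℕ} {f g : ℝ → ℝ}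

theorem div_mem_Icc_of_mem_Icc {i : ℕ} (hi : i ∈ Finset.Icc 1 n) :
    (i : ℝ) / n ∈ Icc (0 : ℝ) 1 :=
  ⟨by positivity, div_le_one_of_le₀ (by exact_mod_cast (Finset.mem_Icc.1 hi).2) (by positivity)⟩

theorem lamn_mono (hfg : ∀ x ∈ Icc (0 : ℝ) 1, f x ≤ g x) : lamn n f ≤ lamn n g :=
  mul_le_mul_of_nonneg_left
    (Finset.sum_le_sum fun _ hi => hfg _ (div_mem_Icc_of_mem_Icc hi)) (by positivity)

theorem lamn_nonneg (hf : ∀ x ∈ Icc (0 : ℝ) 1, 0 ≤ f x) : 0 ≤ lamn n f :=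
  mul_nonneg (by positivity) (Finset.sum_nonneg fun _ hi => hf _ (div_mem_Icc_of_mem_Icc hi))

theorem lamn_add : lamn n (fun x => f x + g x) = lamn n f + lamn n g := by
  simp only [lamn, Finset.sum_add_distrib, mul_add]

theorem lamn_const_mul (c : ℝ) : lamn n (fun x => c * f x) = c * lamn n f := by
  simp only [lamn, ← Finset.mul_sum]
  ring

theorem lamn_const_le {c : ℝ} (hc : 0 ≤ c) : lamn n (fun _ => c) ≤ c := by
  rcases n.eq_zero_or_pos with rfl | hn
  · simpa [lamn] using hc
  · simp [lamn, Finset.sum_const, hn.ne']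

theorem abs_lamn_le {C : ℝ} (hf : ∀ x ∈ Icc (0 : ℝ) 1, |f x| ≤ C) : |lamn n f| ≤ C := by
  have hC : 0 ≤ C := (abs_nonneg _).trans (hf 0 (left_mem_Icc.2 zero_le_one))
  have hle : lamn n f ≤ C :=
    (lamn_mono fun x hx => (abs_le.1 (hf x hx)).2).trans (lamn_const_le hC)
  have hge : lamn n (fun x => -1 * f x) ≤ C :=
    (lamn_mono fun x hx => by linarith [(abs_le.1 (hf x hx)).1]).trans (lamn_const_le hC)
  rw [lamn_const_mul] at hge
  exact abs_le.2 ⟨by linarith, hle⟩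

theorem abs_lam_le {C : ℝ} (hf : ∀ x ∈ Icc (0 : ℝ) 1, |f x| ≤ C) : |lam f| ≤ C := by
  have := intervalIntegral.norm_integral_le_of_norm_le_const (a := 0) (b := 1) (f := f)
    fun x hx => hf x (Ioc_subset_Icc_self (by rwa [uIoc_of_le zero_le_one] at hx))
  rwa [sub_zero, abs_one, mul_one] at this

theorem abs_lamn_sub_lam_le {C : ℝ} (hf : ∀ x ∈ Icc (0 : ℝ) 1, |f x| ≤ C) :
    |lamn n f - lam f| ≤ 2 * C :=
  (abs_sub _ _).trans (by linarith [abs_lamn_le (n := n) hf, abs_lam_le hf])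

end DiscreteUniform

theorem sq_sub_le_of_abs_le {a b M : ℝ} (ha : |a| ≤ M) (hb : |b| ≤ M) :
    (a - b) ^ 2 ≤ (2 * M) ^ 2 := by
  rw [← sq_abs]
  exact pow_le_pow_left₀ (abs_nonneg _) ((abs_sub _ _).trans (by linarith)) 2

noncomputable def discrepancy (H : Set (ℝ → ℝ)) (n : ℕ) : ℝ :=
  sSup {r : ℝ | ∃ h₁ ∈ H, ∃ h₂ ∈ H,
    r = |lamn n (fun x => (h₁ x - h₂ x) ^ 2) - lam (fun x => (h₁ x - h₂ x) ^ 2)|}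

theorem abs_lamn_sub_lam_le_discrepancy {H : Set (ℝ → ℝ)} {M : ℝ}
    (hM : ∀ h ∈ H, ∀ x ∈ Icc (0 : ℝ) 1, |h x| ≤ M) (n : ℕ) {h₁ h₂ : ℝ → ℝ}
    (hh₁ : h₁ ∈ H) (hh₂ : h₂ ∈ H) :
    |lamn n (fun x => (h₁ x - h₂ x) ^ 2) - lam (fun x => (h₁ x - h₂ x) ^ 2)|
      ≤ discrepancy H n := by
  have hsq : ∀ {h₁ h₂}, h₁ ∈ H → h₂ ∈ H →
      ∀ x ∈ Icc (0 : ℝ) 1, |(h₁ x - h₂ x) ^ 2| ≤ (2 * M) ^ 2 := fun hh₁ hh₂ x hx => by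
    rw [abs_of_nonneg (sq_nonneg _)]
    exact sq_sub_le_of_abs_le (hM _ hh₁ x hx) (hM _ hh₂ x hx)
  refine le_csSup ⟨2 * (2 * M) ^ 2, ?_⟩ ⟨h₁, hh₁, h₂, hh₂, rfl⟩
  rintro r ⟨h₁, hh₁, h₂, hh₂, rfl⟩
  exact abs_lamn_sub_lam_le (hsq hh₁ hh₂)

section SquareIntegrable

variable {U : Type*} [MeasurableSpace U] {ν : Measure U}

theorem memLp_of_abs_le {p : ENNReal} {g G₀ : U → ℝ} (hG₀ : MemLp G₀ p ν) (hg : Measurable g)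
    (henv : ∀ x, |g x| ≤ G₀ x) : MemLp g p ν :=
  hG₀.of_le hg.aestronglyMeasurable (ae_of_all _ fun x => by
    simpa only [Real.norm_eq_abs] using (henv x).trans (le_abs_self _))

theorem integral_sq_le_of_abs_le {g G₀ : U → ℝ} (hG₀ : MemLp G₀ 2 ν) (hg : MemLp g 2 ν)
    (henv : ∀ x, |g x| ≤ G₀ x) : ∫ x, g x ^ 2 ∂ν ≤ ∫ x, G₀ x ^ 2 ∂ν :=
  integral_mono hg.integrable_sq hG₀.integrable_sq fun x =>
    sq_le_sq.2 ((henv x).trans (le_abs_self _))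

theorem integral_sq_mul_sub_mul_le {g₁ g₂ : U → ℝ} (hg₁ : MemLp g₁ 2 ν) (hg₂ : MemLp g₂ 2 ν)
    (a b : ℝ) :
    ∫ x, (a * g₁ x - b * g₂ x) ^ 2 ∂ν
      ≤ 2 * a ^ 2 * ∫ x, (g₁ x - g₂ x) ^ 2 ∂ν + 2 * (a - b) ^ 2 * ∫ x, g₂ x ^ 2 ∂ν := by
  have hdiff : Integrable (fun x => (g₁ x - g₂ x) ^ 2) ν := (hg₁.sub hg₂).integrable_sq
  rw [← integral_const_mul, ← integral_const_mul,
    ← integral_add (hdiff.const_mul _) (hg₂.integrable_sq.const_mul _)]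
  refine integral_mono ((hg₁.const_mul a).sub (hg₂.const_mul b)).integrable_sq
    ((hdiff.const_mul _).add (hg₂.integrable_sq.const_mul _)) fun x => ?_
  -- `a g₁ - b g₂ = a (g₁ - g₂) + (a - b) g₂`, and `(u + v)² ≤ 2u² + 2v²`
  nlinarith [sq_nonneg (a * (g₁ x - g₂ x) - (a - b) * g₂ x)]

theorem dProd_le {n : ℕ} {h₁ h₂ : ℝ → ℝ} {g₁ g₂ : U → ℝ} {M : ℝ}
    (hh₁ : ∀ x ∈ Icc (0 : ℝ) 1, |h₁ x| ≤ M) (hg₁ : MemLp g₁ 2 ν) (hg₂ : MemLp g₂ 2 ν) :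
    dProd ν n h₁ h₂ g₁ g₂ ≤ √(2 * M ^ 2 * ∫ x, (g₁ x - g₂ x) ^ 2 ∂ν
      + 2 * (∫ x, g₂ x ^ 2 ∂ν) * lamn n (fun x => (h₁ x - h₂ x) ^ 2)) := by
  refine Real.sqrt_le_sqrt ?_
  change lamn n (fun t => ∫ x, (h₁ t * g₁ x - h₂ t * g₂ x) ^ 2 ∂ν) ≤ _
  have hI : 0 ≤ ∫ x, (g₁ x - g₂ x) ^ 2 ∂ν := integral_nonneg fun _ => sq_nonneg _
  calc _ ≤ lamn n (fun t => 2 * M ^ 2 * ∫ x, (g₁ x - g₂ x) ^ 2 ∂ν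
          + 2 * (∫ x, g₂ x ^ 2 ∂ν) * (h₁ t - h₂ t) ^ 2) := lamn_mono fun t ht => by
        have hsq : h₁ t ^ 2 ≤ M ^ 2 := sq_le_sq.2 ((hh₁ t ht).trans (le_abs_self _))
        refine (integral_sq_mul_sub_mul_le hg₁ hg₂ _ _).trans ?_
        nlinarith [mul_le_mul_of_nonneg_right hsq hI]
    _ ≤ _ := by
        rw [lamn_add, lamn_const_mul (f := fun x => (h₁ x - h₂ x) ^ 2)]
        gcongr
        exact lamn_const_le (by positivity)

end SquareIntegrable

noncomputable def fluctuationModulus {U : Type*} [MeasurableSpace U] (ν : Measure U)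
    (H : Set (ℝ → ℝ)) (G : Set (U → ℝ)) (α : ℝ) (n : ℕ) : ℝ :=
  sSup {r : ℝ | ∃ h₁ ∈ H, ∃ h₂ ∈ H, ∃ g₁ ∈ G, ∃ g₂ ∈ G,
    Real.sqrt (lam (fun x => (h₁ x - h₂ x) ^ 2))
        + Real.sqrt (∫ x, (g₁ x - g₂ x) ^ 2 ∂ν) ≤ α ∧
    r = dProd ν n h₁ h₂ g₁ g₂}

section Modulus

variable {U : Type*} [MeasurableSpace U] {ν : Measure U} {H : Set (ℝ → ℝ)} {G : Set (U → ℝ)}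

theorem fluctuationModulus_nonneg (α : ℝ) (n : ℕ) : 0 ≤ fluctuationModulus ν H G α n :=
  Real.sSup_nonneg <| by
    rintro r ⟨-, -, -, -, -, -, -, -, -, rfl⟩
    exact Real.sqrt_nonneg _

theorem fluctuationModulus_le {G₀ : U → ℝ} {M : ℝ}
    (hM : ∀ h ∈ H, ∀ x ∈ Icc (0 : ℝ) 1, |h x| ≤ M) (hG₀ : MemLp G₀ 2 ν)
    (hG₀norm : ∫ x, G₀ x ^ 2 ∂ν = 1) (hG : ∀ g ∈ G, MemLp g 2 ν)
    (henv : ∀ g ∈ G, ∀ x, |g x| ≤ G₀ x) (α : ℝ) (n : ℕ) :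
    fluctuationModulus ν H G α n ≤ √(2 * (M ^ 2 + 1) * α ^ 2 + 2 * discrepancy H n) := by
  refine Real.sSup_le ?_ (Real.sqrt_nonneg _)
  rintro r ⟨h₁, hh₁, h₂, hh₂, g₁, hg₁, g₂, hg₂, hd, rfl⟩
  have hlam : lam (fun x => (h₁ x - h₂ x) ^ 2) ≤ α ^ 2 :=
    (Real.sqrt_le_iff.1 ((le_add_of_nonneg_right (Real.sqrt_nonneg _)).trans hd)).2
  have hI : ∫ x, (g₁ x - g₂ x) ^ 2 ∂ν ≤ α ^ 2 :=
    (Real.sqrt_le_iff.1 ((le_add_of_nonneg_left (Real.sqrt_nonneg _)).trans hd)).2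
  have hJ : ∫ x, g₂ x ^ 2 ∂ν ≤ 1 :=
    hG₀norm ▸ integral_sq_le_of_abs_le hG₀ (hG g₂ hg₂) (henv g₂ hg₂)
  have hJ0 : 0 ≤ ∫ x, g₂ x ^ 2 ∂ν := integral_nonneg fun _ => sq_nonneg _
  have hL0 : 0 ≤ lamn n (fun x => (h₁ x - h₂ x) ^ 2) := lamn_nonneg fun _ _ => sq_nonneg _
  have hL := (abs_le.1 (abs_lamn_sub_lam_le_discrepancy hM n hh₁ hh₂)).2
  refine (dProd_le (hM h₁ hh₁) (hG g₁ hg₁) (hG g₂ hg₂)).trans (Real.sqrt_le_sqrt ?_)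
  nlinarith [mul_le_mul_of_nonneg_left hI (sq_nonneg M), mul_le_of_le_one_left hL0 hJ]

end Modulus

theorem tendsto_limsup_nhdsGT_zero_of_le {s B : ℝ → ℕ → ℝ} {b : ℝ → ℝ}
    (hs : ∀ α n, 0 ≤ s α n) (hsB : ∀ α n, s α n ≤ B α n)
    (hB : ∀ α, Tendsto (B α) atTop (𝓝 (b α))) (hb : Tendsto b (𝓝[>] 0) (𝓝 0)) :
    Tendsto (fun α => limsup (s α) atTop) (𝓝[>] 0) (𝓝 0) := by
  refine tendsto_of_tendsto_of_tendsto_of_le_of_le tendsto_const_nhds hb (fun α => ?_) fun α => ?_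
  · exact le_limsup_of_frequently_le (Frequently.of_forall (hs α))
      ((hB α).isBoundedUnder_le.mono_le (Eventually.of_forall (hsB α)))
  · refine (limsup_le_limsup (Eventually.of_forall (hsB α)) ?_ (hB α).isBoundedUnder_le).trans
      (hB α).limsup_eq.le
    exact isCoboundedUnder_le_of_le atTop (hs α)

theorem fluctuation_control_general {U : Type*} [MeasurableSpace U]
    (ν : Measure U)
    (H : Set (ℝ → ℝ)) (G : Set (U → ℝ)) (G₀ : U → ℝ)
    (hHbd : ∃ M : ℝ, ∀ h ∈ H, ∀ x ∈ Set.Icc (0:ℝ) 1, |h x| ≤ M)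
    (hG₀L2 : MemLp G₀ 2 ν)
    (hG₀norm : ∫ x, (G₀ x) ^ 2 ∂ν = 1)
    (hGmeas : ∀ g ∈ G, Measurable g)
    (hGenv : ∀ g ∈ G, ∀ x : U, |g x| ≤ G₀ x)
    (hHconv : Filter.Tendsto
      (fun n : ℕ => sSup {r : ℝ | ∃ h₁ ∈ H, ∃ h₂ ∈ H,
        r = |lamn n (fun x => (h₁ x - h₂ x) ^ 2) - lam (fun x => (h₁ x - h₂ x) ^ 2)|})
      Filter.atTop (nhds 0)) :
    Filter.Tendsto
      (fun α : ℝ => Filter.limsup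
        (fun n : ℕ => sSup {r : ℝ | ∃ h₁ ∈ H, ∃ h₂ ∈ H, ∃ g₁ ∈ G, ∃ g₂ ∈ G,
          Real.sqrt (lam (fun x => (h₁ x - h₂ x) ^ 2))
              + Real.sqrt (∫ x, (g₁ x - g₂ x) ^ 2 ∂ν) ≤ α ∧
          r = dProd ν n h₁ h₂ g₁ g₂})
        Filter.atTop)
      (nhdsWithin 0 (Set.Ioi 0)) (nhds 0) := by
  obtain ⟨M, hM⟩ := hHbd
  have hdisc : Tendsto (discrepancy H) atTop (𝓝 0) := hHconv
  have hG : ∀ g ∈ G, MemLp g 2 ν := fun g hg => memLp_of_abs_le hG₀L2 (hGmeas g hg) (hGenv g hg)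
  set c := 2 * (M ^ 2 + 1)
  refine tendsto_limsup_nhdsGT_zero_of_le (s := fluctuationModulus ν H G)
    (B := fun α n => √(c * α ^ 2 + 2 * discrepancy H n)) (b := fun α => √(c * α ^ 2))
    fluctuationModulus_nonneg (fluctuationModulus_le hM hG₀L2 hG₀norm hG hGenv)
    (fun α => ?_) ?_
  · have hcont : Continuous fun e : ℝ => √(c * α ^ 2 + 2 * e) := by fun_prop
    simpa [Function.comp_def] using (hcont.tendsto 0).comp hdisc
  · have hcont : Continuous fun α : ℝ => √(c * α ^ 2) := by fun_prop
    simpa using (hcont.tendsto 0).mono_left nhdsWithin_le_nhds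

/-- Asymptotic flatness of the `L²(λ_n ⊗ ν)` seminorm over `d`-small pairs of products:
if `H` is uniformly bounded with uniformly converging discrete second moments and `G` has
an `L²(ν)` envelope `G₀` with `ν(G₀²) = 1`, then
`lim_{α↓0} limsup_n sup{‖f₁-f₂‖_{L²(λ_n⊗ν)} : d(f₁,f₂) ≤ α} = 0`. -/
theorem fluctuation_control {U : Type*} [MeasurableSpace U]
    (ν : Measure U) [IsProbabilityMeasure ν]
    (H : Set (ℝ → ℝ)) (G : Set (U → ℝ)) (G₀ : U → ℝ)
    (hHne : H.Nonempty) (hGne : G.Nonempty)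
    (hHbd : ∃ M : ℝ, ∀ h ∈ H, ∀ x ∈ Set.Icc (0:ℝ) 1, |h x| ≤ M)
    (hG₀meas : Measurable G₀)
    (hG₀L2 : MemLp G₀ 2 ν)
    (hG₀norm : ∫ x, (G₀ x) ^ 2 ∂ν = 1)
    (hGmeas : ∀ g ∈ G, Measurable g)
    (hGenv : ∀ g ∈ G, ∀ x : U, |g x| ≤ G₀ x)
    (hHconv : Filter.Tendsto
      (fun n : ℕ => sSup {r : ℝ | ∃ h₁ ∈ H, ∃ h₂ ∈ H,
        r = |lamn n (fun x => (h₁ x - h₂ x) ^ 2) - lam (fun x => (h₁ x - h₂ x) ^ 2)|})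
      Filter.atTop (nhds 0)) :
    Filter.Tendsto
      (fun α : ℝ => Filter.limsup
        (fun n : ℕ => sSup {r : ℝ | ∃ h₁ ∈ H, ∃ h₂ ∈ H, ∃ g₁ ∈ G, ∃ g₂ ∈ G,
          Real.sqrt (lam (fun x => (h₁ x - h₂ x) ^ 2))
              + Real.sqrt (∫ x, (g₁ x - g₂ x) ^ 2 ∂ν) ≤ α ∧
          r = dProd ν n h₁ h₂ g₁ g₂})
        Filter.atTop)
      (nhdsWithin 0 (Set.Ioi 0)) (nhds 0) :=
  fluctuation_control_general ν H G G₀ hHbd hG₀L2 hG₀norm hGmeas hGenv hHconv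
end

section
/- Let q : [0,1] × U → ℝ be measurable such that (a) |q(s,x)| ≤ g(x) for all (s,x) with g ∈ L²(ν), and (b) for each x ∈ U the map s ↦ q(s,x) is continuous at λ-almost every s ∈ [0,1]. Then (λ_n ⊗ ν)(q²) → (λ ⊗ ν)(q²) as n → ∞, where λ_n = n⁻¹∑_{i=1}^n δ_{i/n}. -/
/-!
Rounding `s` up to the grid `(1/n)ℤ`, `gridCeil n s = ⌈n s⌉ / n`, turns the right Riemann sum
`(1/n) ∑ᵢ f(i/n)` into the integral of the step function `f ∘ gridCeil n` over `[0,1]`.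
Since `gridCeil n s → s`, dominated convergence shows that the Riemann sums of a bounded,
measurable `f` converge to `∫₀¹ f` as soon as `f` is continuous at almost every point.
Applied to `q(·,x)²` with bound `g(x)²` this gives convergence for every `x`; a second dominated
convergence in `x`, with the integrable bound `g²`, and Fubini give the claim.
-/

open MeasureTheory Filter Set
open scoped Topology

noncomputable def gridCeil (n : ℕ) (s : ℝ) : ℝ := ⌈(n : ℝ) * s⌉ / n

lemma measurable_gridCeil (n : ℕ) : Measurable (gridCeil n) :=
  (measurable_from_top.comp (measurable_const.mul measurable_id).ceil).div_const _

lemma gridCeil_mem_Icc {n : ℕ} {s : ℝ} (hs : s ∈ Icc (0 : ℝ) 1) :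
    gridCeil n s ∈ Icc (0 : ℝ) 1 := by
  obtain ⟨h0, h1⟩ := hs
  rcases Nat.eq_zero_or_pos n with rfl | hn
  · simp [gridCeil]
  have hn' : (0 : ℝ) < n := by exact_mod_cast hn
  refine ⟨div_nonneg (by exact_mod_cast Int.ceil_nonneg (by positivity)) hn'.le, ?_⟩
  rw [gridCeil, div_le_one hn']
  exact_mod_cast Int.ceil_le.mpr (by push_cast; nlinarith)

lemma gridCeil_mem_Icc_add {n : ℕ} (hn : 0 < n) (s : ℝ) : gridCeil n s ∈ Icc s (s + 1 / n) := by
  have hn' : (0 : ℝ) < n := by exact_mod_cast hn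
  rw [gridCeil, mem_Icc, le_div_iff₀ hn', div_le_iff₀ hn']
  constructor
  · linarith [Int.le_ceil ((n : ℝ) * s)]
  · have := Int.ceil_lt_add_one ((n : ℝ) * s)
    field_simp
    linarith

lemma tendsto_gridCeil (s : ℝ) : Tendsto (fun n : ℕ => gridCeil n s) atTop (𝓝 s) := by
  have h : Tendsto (fun n : ℕ => s + 1 / (n : ℝ)) atTop (𝓝 s) := by
    simpa using tendsto_const_nhds.add (tendsto_one_div_atTop_nhds_zero_nat (𝕜 := ℝ))
  refine tendsto_of_tendsto_of_tendsto_of_le_of_le' tendsto_const_nhds h ?_ ?_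
  all_goals filter_upwards [eventually_gt_atTop 0] with n hn
  · exact (gridCeil_mem_Icc_add hn s).1
  · exact (gridCeil_mem_Icc_add hn s).2

lemma eqOn_gridCeil_Ioc {n : ℕ} (hn : 0 < n) (k : ℕ) :
    EqOn (gridCeil n) (fun _ => ((k + 1 : ℕ) : ℝ) / n) (Ioc ((k : ℝ) / n) ((k + 1 : ℕ) / n)) := by
  intro s ⟨hk, hk1⟩
  have hn' : (0 : ℝ) < n := by exact_mod_cast hn
  rw [div_lt_iff₀ hn'] at hk
  rw [le_div_iff₀ hn'] at hk1
  have hceil : ⌈(n : ℝ) * s⌉ = k + 1 := by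
    rw [Int.ceil_eq_iff]
    push_cast at hk1 ⊢
    constructor <;> linarith
  simp [gridCeil, hceil]

noncomputable def rightRiemannSum {E : Type*} [AddCommGroup E] [Module ℝ E] (f : ℝ → E) (n : ℕ) :
    E :=
  (n : ℝ)⁻¹ • ∑ i ∈ Finset.Icc 1 n, f (i / n)

lemma natCast_div_mem_Icc {i n : ℕ} (hi : i ∈ Finset.Icc 1 n) : (i : ℝ) / n ∈ Icc (0 : ℝ) 1 := by
  obtain ⟨-, hin⟩ := Finset.mem_Icc.mp hi
  exact ⟨by positivity, div_le_one_of_le₀ (by exact_mod_cast hin) (Nat.cast_nonneg n)⟩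

section RiemannSum

variable {E : Type*} [NormedAddCommGroup E]

lemma intervalIntegrable_comp_gridCeil {n : ℕ} (hn : 0 < n) (f : ℝ → E) (k : ℕ) :
    IntervalIntegrable (fun s => f (gridCeil n s)) volume ((k : ℝ) / n) ((k + 1 : ℕ) / n) := by
  have hle : (k : ℝ) / n ≤ (k + 1 : ℕ) / n := by gcongr; simp
  rw [intervalIntegrable_iff_integrableOn_Ioc_of_le hle]
  exact (integrableOn_const measure_Ioc_lt_top.ne).congr_fun
    (fun s hs => congrArg f (eqOn_gridCeil_Ioc hn k hs).symm) measurableSet_Ioc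

variable [NormedSpace ℝ E]

lemma norm_rightRiemannSum_le {f : ℝ → E} {C : ℝ} (hf : ∀ s ∈ Icc (0 : ℝ) 1, ‖f s‖ ≤ C)
    (n : ℕ) : ‖rightRiemannSum f n‖ ≤ C := by
  rcases Nat.eq_zero_or_pos n with rfl | hn
  · simpa [rightRiemannSum] using (norm_nonneg _).trans (hf 0 (left_mem_Icc.mpr zero_le_one))
  have hn' : (0 : ℝ) < n := by exact_mod_cast hn
  calc ‖rightRiemannSum f n‖ ≤ (n : ℝ)⁻¹ * ∑ i ∈ Finset.Icc 1 n, ‖f (i / n)‖ := by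
        rw [rightRiemannSum, norm_smul, Real.norm_of_nonneg (by positivity)]
        gcongr
        exact norm_sum_le _ _
    _ ≤ (n : ℝ)⁻¹ * ∑ _i ∈ Finset.Icc 1 n, C := by
        gcongr with i hi
        exact hf _ (natCast_div_mem_Icc hi)
    _ = C := by simp [hn'.ne']

variable [CompleteSpace E]

lemma intervalIntegral_comp_gridCeil {n : ℕ} (hn : 0 < n) (f : ℝ → E) (k : ℕ) :
    ∫ s in (k : ℝ) / n..(k + 1 : ℕ) / n, f (gridCeil n s) = (n : ℝ)⁻¹ • f ((k + 1 : ℕ) / n) := by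
  have hn' : (0 : ℝ) < n := by exact_mod_cast hn
  have hle : (k : ℝ) / n ≤ (k + 1 : ℕ) / n := by gcongr; simp
  rw [intervalIntegral.integral_of_le hle,
    setIntegral_congr_fun measurableSet_Ioc fun s hs => congrArg f (eqOn_gridCeil_Ioc hn k hs),
    setIntegral_const, measureReal_def, Real.volume_Ioc, ENNReal.toReal_ofReal (by linarith)]
  congr 1
  field_simp
  push_cast
  ring

lemma setIntegral_Icc_comp_gridCeil {n : ℕ} (hn : 0 < n) (f : ℝ → E) :
    ∫ s in Icc (0 : ℝ) 1, f (gridCeil n s) = rightRiemannSum f n := by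
  have hsum := intervalIntegral.sum_integral_adjacent_intervals (a := fun k : ℕ => (k : ℝ) / n)
    (n := n) fun k _ => intervalIntegrable_comp_gridCeil hn f k
  simp only [Nat.cast_zero, zero_div, div_self (Nat.cast_ne_zero.mpr hn.ne' : (n : ℝ) ≠ 0)]
    at hsum
  rw [integral_Icc_eq_integral_Ioc, ← intervalIntegral.integral_of_le zero_le_one, ← hsum,
    rightRiemannSum, Finset.smul_sum, ← Finset.Ico_add_one_right_eq_Icc,
    Finset.sum_Ico_eq_sum_range, Nat.add_sub_cancel]
  exact Finset.sum_congr rfl fun k _ => by rw [intervalIntegral_comp_gridCeil hn f k, add_comm]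

theorem tendsto_rightRiemannSum_of_ae_continuousAt {f : ℝ → E} {C : ℝ}
    (hmeas : StronglyMeasurable f) (hf : ∀ s ∈ Icc (0 : ℝ) 1, ‖f s‖ ≤ C)
    (hcont : ∀ᵐ s ∂volume.restrict (Icc (0 : ℝ) 1), ContinuousAt f s) :
    Tendsto (rightRiemannSum f) atTop (𝓝 (∫ s in Icc (0 : ℝ) 1, f s)) := by
  have hstep : Tendsto (fun n => ∫ s in Icc (0 : ℝ) 1, f (gridCeil n s)) atTop
      (𝓝 (∫ s in Icc (0 : ℝ) 1, f s)) :=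
    tendsto_integral_of_dominated_convergence (fun _ => C)
      (fun n => (hmeas.comp_measurable (measurable_gridCeil n)).aestronglyMeasurable)
      (integrable_const C)
      (fun n => (ae_restrict_mem measurableSet_Icc).mono fun s hs => hf _ (gridCeil_mem_Icc hs))
      (hcont.mono fun s hs => hs.tendsto.comp (tendsto_gridCeil s))
  exact hstep.congr' ((eventually_gt_atTop 0).mono fun n hn => setIntegral_Icc_comp_gridCeil hn f)

end RiemannSum

/-- If `q` is measurable with an `L²(ν)` envelope and `s ↦ q(s,x)` is a.e. continuous for
each `x`, then `(λ_n ⊗ ν)(q²) → (λ ⊗ ν)(q²)`. -/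
theorem discrete_product_second_moment_convergence {U : Type*} [MeasurableSpace U]
    (ν : Measure U) [IsProbabilityMeasure ν]
    (q : ℝ → U → ℝ) (g : U → ℝ)
    (hqmeas : Measurable (Function.uncurry q))
    (hgL2 : MemLp g 2 ν)
    (henv : ∀ s ∈ Set.Icc (0:ℝ) 1, ∀ x : U, |q s x| ≤ g x)
    (hcont : ∀ x : U, ∀ᵐ s ∂(volume.restrict (Set.Icc (0:ℝ) 1)),
      ContinuousAt (fun s' => q s' x) s) :
    Filter.Tendsto
      (fun n : ℕ => (1 / (n:ℝ)) * ∑ i ∈ Finset.Icc 1 n, ∫ x, (q ((i:ℝ) / n) x) ^ 2 ∂ν)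
      Filter.atTop
      (nhds (∫ p : ℝ × U, (q p.1 p.2) ^ 2 ∂((volume.restrict (Set.Icc (0:ℝ) 1)).prod ν))) := by
  have hg2 : Integrable (fun x => g x ^ 2) ν := hgL2.integrable_sq
  have hsq : ∀ s ∈ Icc (0 : ℝ) 1, ∀ x, ‖q s x ^ 2‖ ≤ g x ^ 2 := fun s hs x => by
    rw [Real.norm_eq_abs, abs_pow]
    exact pow_le_pow_left₀ (abs_nonneg _) (henv s hs x) 2
  have hmeas_slice : ∀ s, Measurable fun x => q s x ^ 2 := fun s =>
    (hqmeas.comp measurable_prodMk_left).pow_const 2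
  have hint_slice : ∀ s ∈ Icc (0 : ℝ) 1, Integrable (fun x => q s x ^ 2) ν := fun s hs =>
    hg2.mono' (hmeas_slice s).aestronglyMeasurable (ae_of_all _ (hsq s hs))
  have hmeas_section : ∀ x, Measurable fun s => q s x ^ 2 := fun x =>
    (hqmeas.comp measurable_prodMk_right).pow_const 2
  have hint : Integrable (fun p : ℝ × U => q p.1 p.2 ^ 2) ((volume.restrict (Icc 0 1)).prod ν) :=
    (hg2.comp_snd _).mono' (hqmeas.pow_const 2).aestronglyMeasurable
      (Measure.quasiMeasurePreserving_fst.ae (ae_restrict_mem measurableSet_Icc) |>.mono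
        fun p hp => hsq _ hp p.2)
  have hmeas_sum : ∀ n, Measurable fun x => rightRiemannSum (fun s => q s x ^ 2) n := fun n => by
    unfold rightRiemannSum
    fun_prop
  have hsum_eq : ∀ n : ℕ, (1 / (n:ℝ)) * ∑ i ∈ Finset.Icc 1 n, ∫ x, q (i / n) x ^ 2 ∂ν =
      ∫ x, rightRiemannSum (fun s => q s x ^ 2) n ∂ν := fun n => by
    simp only [rightRiemannSum]
    rw [integral_smul, integral_finsetSum _ fun i hi => hint_slice _ (natCast_div_mem_Icc hi),
      smul_eq_mul, one_div]
  simp_rw [hsum_eq, integral_prod_symm _ hint]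
  refine tendsto_integral_of_dominated_convergence (fun x => g x ^ 2)
    (fun n => (hmeas_sum n).aestronglyMeasurable) hg2
    (fun n => ae_of_all _ fun x => norm_rightRiemannSum_le (fun s hs => hsq s hs x) n)
    (ae_of_all _ fun x => tendsto_rightRiemannSum_of_ae_continuousAt
      (hmeas_section x).stronglyMeasurable (fun s hs => hsq s hs x)
      ((hcont x).mono fun s hs => hs.pow 2))
end
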